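/- arXiv:1306.1297 — 2 statements merged into one kernel-verified Lean document; each statement's English description precedes it below -/
import Mathlib

section
/- Let λ ∈ ℝ and let y : ℝ → ℝ be twice continuously differentiable and satisfy (a(x)²/2)·y''(x) + b(x)·y'(x) = λ·y(x) for all x ∈ ℝ. Then for every x₀, x ∈ ℝ, y admits the integral representation y(x) = y(x₀) + y'(x₀)·Φ(x₀,x) + 2λ·∫_{x₀}^{x} (Φ(s,x)/a(s)²)·y(s) ds. -/
/-!
Put `q = b / a²` and `f = 2λ y / a²`, so that the equation reads `y'' + 2q y' = f`. With the
integrating factor `E(t) = exp (2 ∫_{x₀}^t q)` one has `(E y')' = E f`, and `φ(s, t) = E(s) / E(t)`.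
Hence `y'(t) = y'(x₀) φ(x₀, t) + ∫_{x₀}^t φ(s, t) f(s) ds`; integrating once more and exchanging
the order of integration over the triangle `x₀ ≤ s ≤ t ≤ x` gives the representation.
-/

open Real intervalIntegral

theorem integral_integral_mul_eq_integral_mul_integral {g h : ℝ → ℝ} (hg : Continuous g)
    (hh : Continuous h) (a b : ℝ) :
    ∫ s in a..b, (∫ t in s..b, g t) * h s = ∫ t in a..b, g t * ∫ s in a..t, h s := by
  set G : ℝ → ℝ := fun t => ∫ r in a..t, g r
  set H : ℝ → ℝ := fun t => ∫ r in a..t, h r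
  have hG : ∀ t, HasDerivAt G (g t) t := fun t => (hg.integral_hasStrictDerivAt a t).hasDerivAt
  have hH : ∀ t, HasDerivAt H (h t) t := fun t => (hh.integral_hasStrictDerivAt a t).hasDerivAt
  have hGc : Continuous G := continuous_primitive hg.intervalIntegrable a
  have hparts := integral_mul_deriv_eq_deriv_mul (fun t _ => hG t) (fun t _ => hH t)
    (hg.intervalIntegrable a b) (hh.intervalIntegrable a b)
  have htail : ∀ s, ∫ t in s..b, g t = G b - G s := fun s =>
    (integral_interval_sub_left (hg.intervalIntegrable a b) (hg.intervalIntegrable a s)).symm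
  simp only [htail, sub_mul]
  rw [integral_sub ((by fun_prop : Continuous fun s => G b * h s).intervalIntegrable a b)
    ((by fun_prop : Continuous fun s => G s * h s).intervalIntegrable a b), integral_const_mul,
    hparts]
  simp [G, H]

theorem mul_exp_integral_eq_of_hasDerivAt {p g u : ℝ → ℝ} (hp : Continuous p)
    (hg : Continuous g) (hu : ∀ t, HasDerivAt u (g t - p t * u t) t) (x₀ t : ℝ) :
    u t * exp (∫ s in x₀..t, p s) = u x₀ + ∫ s in x₀..t, exp (∫ r in x₀..s, p r) * g s := by
  have hE : ∀ s, HasDerivAt (fun s => exp (∫ r in x₀..s, p r))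
      (exp (∫ r in x₀..s, p r) * p s) s := fun s =>
    (hp.integral_hasStrictDerivAt x₀ s).hasDerivAt.exp
  have hEc : Continuous fun s => exp (∫ r in x₀..s, p r) :=
    continuous_iff_continuousAt.2 fun s => (hE s).continuousAt
  have hFTC := integral_eq_sub_of_hasDerivAt (a := x₀) (b := t)
    (fun s _ => ((hu s).fun_mul (hE s)).congr_deriv (by ring : _ = exp (∫ r in x₀..s, p r) * g s))
    ((hEc.fun_mul hg).intervalIntegrable _ _)
  simp only [integral_same, exp_zero, mul_one] at hFTC
  linarith

theorem eq_add_mul_integral_add_integral_of_hasDerivAt {y w k : ℝ → ℝ} {c x₀ : ℝ}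
    (hw : Continuous w) (hk : Continuous k)
    (hy : ∀ t, HasDerivAt y (w t * (c + ∫ s in x₀..t, k s)) t) (x : ℝ) :
    y x = y x₀ + c * (∫ t in x₀..x, w t) + ∫ s in x₀..x, (∫ t in s..x, w t) * k s := by
  have hK : Continuous fun t => ∫ s in x₀..t, k s :=
    continuous_primitive (μ := MeasureTheory.volume) hk.intervalIntegrable x₀
  have hFTC := integral_eq_sub_of_hasDerivAt (fun t _ => hy t)
    ((hw.fun_mul (continuous_const.fun_add hK)).intervalIntegrable x₀ x)
  simp only [mul_add] at hFTC
  rw [integral_add ((hw.fun_mul continuous_const).intervalIntegrable x₀ x)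
    ((hw.fun_mul hK).intervalIntegrable x₀ x), integral_mul_const] at hFTC
  rw [integral_integral_mul_eq_integral_mul_integral hw hk]
  linarith

theorem hasDerivAt_deriv_of_ode {a b y : ℝ → ℝ} {lam : ℝ} (ha0 : ∀ x, a x ≠ 0)
    (hy : ContDiff ℝ 2 y)
    (hode : ∀ x, a x ^ 2 / 2 * deriv (deriv y) x + b x * deriv y x = lam * y x) (t : ℝ) :
    HasDerivAt (deriv y) (2 * lam * y t / a t ^ 2 - 2 * (b t / a t ^ 2) * deriv y t) t := by
  have hy' : ContDiff ℝ 1 (deriv y) := hy.iterate_deriv' 1 1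
  refine (hy'.differentiable one_ne_zero t).hasDerivAt.congr_deriv ?_
  have := ha0 t
  field_simp
  linear_combination 2 * hode t

/-- If `y` is `C²` and solves `(a²/2)y'' + b y' = λ y` on `ℝ`, then it admits the
integral representation
`y(x) = y(x₀) + y'(x₀)·Φ(x₀,x) + 2λ·∫_{x₀}^{x} (Φ(s,x)/a(s)²)·y(s) ds`. -/
theorem stmt_5 (a b : ℝ → ℝ) (ha : Continuous a) (hb : Continuous b)
    (ha0 : ∀ x, a x ≠ 0)
    (φ Φ : ℝ → ℝ → ℝ)
    (hφ : ∀ x₀ x, φ x₀ x = Real.exp (-2 * ∫ u in x₀..x, b u / (a u) ^ 2))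
    (hΦ : ∀ x₀ x, Φ x₀ x = ∫ z in x₀..x, φ x₀ z)
    (lam : ℝ) (y : ℝ → ℝ) (hy : ContDiff ℝ 2 y)
    (hode : ∀ x, (a x) ^ 2 / 2 * deriv (deriv y) x + b x * deriv y x = lam * y x) :
    ∀ x₀ x : ℝ,
      y x = y x₀ + deriv y x₀ * Φ x₀ x
        + 2 * lam * ∫ s in x₀..x, Φ s x / (a s) ^ 2 * y s := by
  intro x₀ x
  have ha2 : ∀ u, a u ^ 2 ≠ 0 := fun u => pow_ne_zero 2 (ha0 u)
  have hq : Continuous fun u => b u / a u ^ 2 := hb.div (ha.pow 2) ha2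
  have hf : Continuous fun s => 2 * lam * y s / a s ^ 2 :=
    (continuous_const.fun_mul hy.continuous).div (ha.pow 2) ha2
  set E : ℝ → ℝ := fun t => exp (2 * ∫ u in x₀..t, b u / a u ^ 2)
  have hEc : Continuous E := by
    have := continuous_primitive (μ := MeasureTheory.volume) hq.intervalIntegrable x₀
    fun_prop
  have hE0 : ∀ t, E t ≠ 0 := fun t => exp_ne_zero _
  have hy' : ∀ t, HasDerivAt y
      ((E t)⁻¹ * (deriv y x₀ + ∫ s in x₀..t, E s * (2 * lam * y s / a s ^ 2))) t := by
    intro t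
    have hE := mul_exp_integral_eq_of_hasDerivAt (p := fun u => 2 * (b u / a u ^ 2))
      (by fun_prop) hf (hasDerivAt_deriv_of_ode ha0 hy hode) x₀ t
    simp only [integral_const_mul] at hE
    rw [← hE, mul_comm, mul_inv_cancel_right₀ (hE0 t)]
    exact (hy.differentiable two_ne_zero t).hasDerivAt
  have hΦE : ∀ s, Φ s x = E s * ∫ t in s..x, (E t)⁻¹ := by
    intro s
    rw [hΦ, ← integral_const_mul]
    refine integral_congr fun t _ => ?_
    rw [hφ, ← integral_interval_sub_left (hq.intervalIntegrable x₀ t) (hq.intervalIntegrable x₀ s)]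
    simp only [E, ← exp_neg, ← exp_add]
    ring_nf
  rw [eq_add_mul_integral_add_integral_of_hasDerivAt (hEc.fun_inv₀ hE0) (hEc.fun_mul hf) hy' x,
    ← integral_const_mul (2 * lam), hΦE x₀]
  congr 1
  · simp [E]
  · refine integral_congr fun s _ => ?_
    rw [hΦE]
    ring
end

section
/- Let λ ∈ ℝ and let y : ℝ → ℝ be twice continuously differentiable and satisfy (a(x)²/2)·y''(x) + b(x)·y'(x) = λ·y(x) for all x ∈ ℝ. Then for every x₀, x ∈ ℝ, the derivative of y admits the representation y'(x) = y'(x₀)·φ(x₀,x) + 2λ·∫_{x₀}^{x} (φ(s,x)/a(s)²)·y(s) ds. -/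
/-!
Writing `p = 2b/a²`, the equation says that `z = y'` solves the first-order linear
equation `z' + p z = 2λ y / a²`. Multiplying by the integrating factor `exp (∫_{x₀}^t p)`
turns its left-hand side into an exact derivative, and integrating from `x₀` to `x` gives
the representation, since `φ(s,x) = exp (-∫_s^x p)`.
-/

open Real intervalIntegral

theorem hasDerivAt_exp_integral_mul {p g z : ℝ → ℝ} (hp : Continuous p)
    (hz : ∀ t, HasDerivAt z (g t - p t * z t) t) (x₀ t : ℝ) :
    HasDerivAt (fun t => exp (∫ u in x₀..t, p u) * z t)
      (exp (∫ u in x₀..t, p u) * g t) t := by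
  have hP : HasDerivAt (fun t => ∫ u in x₀..t, p u) (p t) t :=
    integral_hasDerivAt_right (hp.intervalIntegrable _ _) (hp.stronglyMeasurableAtFilter _ _)
      hp.continuousAt
  exact (hP.exp.mul (hz t)).congr_deriv (by ring)

theorem eq_integral_of_hasDerivAt_linear {p g z : ℝ → ℝ} (hp : Continuous p)
    (hg : Continuous g) (hz : ∀ t, HasDerivAt z (g t - p t * z t) t) (x₀ x : ℝ) :
    z x = z x₀ * exp (-∫ u in x₀..x, p u)
      + ∫ s in x₀..x, exp (-∫ u in s..x, p u) * g s := by
  set P : ℝ → ℝ := fun t => ∫ u in x₀..t, p u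
  have hPcont : Continuous P := continuous_primitive (fun _ _ => hp.intervalIntegrable _ _) x₀
  have hFTC : exp (P x) * z x - exp (P x₀) * z x₀ = ∫ s in x₀..x, exp (P s) * g s :=
    (integral_eq_sub_of_hasDerivAt (fun t _ => hasDerivAt_exp_integral_mul hp hz x₀ t)
      ((hPcont.rexp.mul hg).intervalIntegrable _ _)).symm
  have hP_sub : ∀ s, ∫ u in s..x, p u = P x - P s := fun s =>
    (integral_interval_sub_left (hp.intervalIntegrable _ _) (hp.intervalIntegrable _ _)).symm
  have hPx₀ : P x₀ = 0 := integral_same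
  have hint : ∫ s in x₀..x, exp (-∫ u in s..x, p u) * g s
      = exp (-P x) * ∫ s in x₀..x, exp (P s) * g s := by
    rw [← integral_const_mul]
    refine integral_congr fun s _ => ?_
    rw [hP_sub, show -(P x - P s) = -P x + P s by ring, exp_add]
    ring
  rw [hint, ← hFTC, hPx₀, exp_zero, one_mul, mul_sub, ← mul_assoc, ← exp_add, neg_add_cancel,
    exp_zero, one_mul]
  ring

theorem stmt_6_general (a b : ℝ → ℝ) (ha : Continuous a) (hb : Continuous b)
    (ha0 : ∀ x, a x ≠ 0)
    (φ : ℝ → ℝ → ℝ)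
    (hφ : ∀ x₀ x, φ x₀ x = Real.exp (-2 * ∫ u in x₀..x, b u / (a u) ^ 2))
    (lam : ℝ) (y : ℝ → ℝ) (hy : ContDiff ℝ 2 y)
    (hode : ∀ x, (a x) ^ 2 / 2 * deriv (deriv y) x + b x * deriv y x = lam * y x) :
    ∀ x₀ x : ℝ,
      deriv y x = deriv y x₀ * φ x₀ x
        + 2 * lam * ∫ s in x₀..x, φ s x / (a s) ^ 2 * y s := by
  intro x₀ x
  have ha2 : ∀ t, a t ^ 2 ≠ 0 := fun t => pow_ne_zero 2 (ha0 t)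
  have hy' : ContDiff ℝ 1 (deriv y) := hy.iterate_deriv' 1 1
  have hy'' : ∀ t, HasDerivAt (deriv y)
      (2 * lam / a t ^ 2 * y t - 2 * (b t / a t ^ 2) * deriv y t) t := by
    intro t
    have hy''_eq :
        deriv (deriv y) t = 2 * lam / a t ^ 2 * y t - 2 * (b t / a t ^ 2) * deriv y t := by
      field_simp
      rw [eq_div_iff (ha2 t)]
      linear_combination 2 * hode t
    exact hy''_eq ▸ ((hy'.differentiable one_ne_zero) t).hasDerivAt
  have hφ_exp : ∀ s, φ s x = exp (-∫ u in s..x, 2 * (b u / a u ^ 2)) := fun s => by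
    rw [hφ, integral_const_mul, neg_mul]
  have hp : Continuous fun u => 2 * (b u / a u ^ 2) :=
    continuous_const.mul (hb.div (ha.pow 2) ha2)
  have hg : Continuous fun u => 2 * lam / a u ^ 2 * y u :=
    (continuous_const.div (ha.pow 2) ha2).mul hy.continuous
  rw [eq_integral_of_hasDerivAt_linear hp hg hy'' x₀ x, hφ_exp, ← integral_const_mul]
  congr 1
  refine integral_congr fun s _ => ?_
  simp only [hφ_exp]
  ring

/-- If `y` is `C²` and solves `(a²/2)y'' + b y' = λ y` on `ℝ`, then its derivative
admits the representation
`y'(x) = y'(x₀)·φ(x₀,x) + 2λ·∫_{x₀}^{x} (φ(s,x)/a(s)²)·y(s) ds`. -/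
theorem stmt_6 (a b : ℝ → ℝ) (ha : Continuous a) (hb : Continuous b)
    (ha0 : ∀ x, a x ≠ 0)
    (φ Φ : ℝ → ℝ → ℝ)
    (hφ : ∀ x₀ x, φ x₀ x = Real.exp (-2 * ∫ u in x₀..x, b u / (a u) ^ 2))
    (hΦ : ∀ x₀ x, Φ x₀ x = ∫ z in x₀..x, φ x₀ z)
    (lam : ℝ) (y : ℝ → ℝ) (hy : ContDiff ℝ 2 y)
    (hode : ∀ x, (a x) ^ 2 / 2 * deriv (deriv y) x + b x * deriv y x = lam * y x) :
    ∀ x₀ x : ℝ,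
      deriv y x = deriv y x₀ * φ x₀ x
        + 2 * lam * ∫ s in x₀..x, φ s x / (a s) ^ 2 * y s :=
  stmt_6_general a b ha hb ha0 φ hφ lam y hy hode
end
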